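/- arXiv:1706.09236 — 6 statements merged into one kernel-verified Lean document; each statement's English description precedes it below -/
import Mathlib

section
/- Let f be a polynomial over ℝ in d variables with f_p > 0 for some exponent vector p in the frame of f that is a vertex of the Newton polytope of f, and suppose f(1,…,1) < 0. Then f has a zero with all coordinates strictly positive. -/
/-!
Restricting f to the curve a ↦ (a ^ n₁, …, a ^ n_d), where n is a normal vector exposing the
vertex p of the Newton polytope, turns f into the exponential sum g(a) = ∑_q f_q a ^ ⟪n, q⟫.
Its exponent ⟪n, p⟫ is strictly the largest, so g(a) > 0 for large a, while g(1) = f(1, …, 1) < 0;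
the intermediate value theorem gives a zero a > 1 of g, i.e. the positive zero (a ^ n_i)_i of f.
-/

open Filter Topology Finset

section ExponentialSum

variable {ι : Type*} (F : Finset ι) (c e : ι → ℝ)

theorem tendsto_sum_mul_rpow_sub_atTop {p : ι} (hp : p ∈ F)
    (hmax : ∀ q ∈ F, q ≠ p → e q < e p) :
    Tendsto (fun a : ℝ => ∑ q ∈ F, c q * a ^ (e q - e p)) atTop (𝓝 (c p)) := by
  classical
  have hcp : c p = ∑ q ∈ F, if p = q then c q else 0 := by rw [sum_ite_eq, if_pos hp]
  rw [hcp]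
  refine tendsto_finsetSum _ fun q hq => ?_
  by_cases hqp : q = p
  · subst hqp
    simpa only [if_true, sub_self, Real.rpow_zero, mul_one] using tendsto_const_nhds
  · rw [if_neg (Ne.symm hqp), ← mul_zero (c q), ← neg_neg (e q - e p)]
    exact (tendsto_rpow_neg_atTop (by linarith [hmax q hq hqp])).const_mul (c q)

theorem eventually_pos_sum_mul_rpow {p : ι} (hp : p ∈ F) (hcp : 0 < c p)
    (hmax : ∀ q ∈ F, q ≠ p → e q < e p) :
    ∀ᶠ a : ℝ in atTop, 0 < ∑ q ∈ F, c q * a ^ e q := by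
  filter_upwards [(tendsto_sum_mul_rpow_sub_atTop F c e hp hmax).eventually
    (eventually_gt_nhds hcp), eventually_gt_atTop 0] with a hsum ha
  have hfactor : ∑ q ∈ F, c q * a ^ e q = a ^ e p * ∑ q ∈ F, c q * a ^ (e q - e p) := by
    rw [mul_sum]
    refine sum_congr rfl fun q _ => ?_
    rw [Real.rpow_sub ha]
    field_simp [(Real.rpow_pos_of_pos ha (e p)).ne']
  rw [hfactor]
  exact mul_pos (Real.rpow_pos_of_pos ha _) hsum

theorem continuousOn_sum_mul_rpow :
    ContinuousOn (fun a : ℝ => ∑ q ∈ F, c q * a ^ e q) (Set.Ioi 0) :=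
  continuousOn_finsetSum F fun q _ => continuousOn_const.mul
    fun a ha => (Real.continuousAt_rpow_const a (e q) (Or.inl (ne_of_gt ha))).continuousWithinAt

theorem exists_gt_one_sum_mul_rpow_eq_zero {p : ι} (hp : p ∈ F) (hcp : 0 < c p)
    (hmax : ∀ q ∈ F, q ≠ p → e q < e p) (hone : ∑ q ∈ F, c q < 0) :
    ∃ a : ℝ, 1 ≤ a ∧ ∑ q ∈ F, c q * a ^ e q = 0 := by
  obtain ⟨A, hApos, hA1⟩ :=
    ((eventually_pos_sum_mul_rpow F c e hp hcp hmax).and (eventually_ge_atTop 1)).exists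
  have hcont := (continuousOn_sum_mul_rpow F c e).mono
    fun a (ha : a ∈ Set.Icc 1 A) => show 0 < a by linarith [ha.1]
  have hzero : (0 : ℝ) ∈ Set.Icc (∑ q ∈ F, c q * (1 : ℝ) ^ e q) (∑ q ∈ F, c q * A ^ e q) := by
    simp only [Real.one_rpow, mul_one]
    exact ⟨hone.le, hApos.le⟩
  obtain ⟨a, ha, hga⟩ := intermediate_value_Icc hA1 hcont hzero
  exact ⟨a, ha.1, hga⟩

end ExponentialSum

theorem prod_rpow_pow_eq_rpow_sum {d : ℕ} {a : ℝ} (ha : 0 < a) (n : Fin d → ℝ) (q : Fin d → ℕ) :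
    ∏ i, (a ^ n i) ^ q i = a ^ ∑ i, n i * (q i : ℝ) := by
  rw [Real.rpow_sum_of_pos ha]
  refine prod_congr rfl fun i _ => ?_
  rw [← Real.rpow_natCast, ← Real.rpow_mul ha.le]

theorem subtropical_root_finding_general {d : ℕ} (F : Finset (Fin d → ℕ))
    (coef : (Fin d → ℕ) → ℝ)
    (p : Fin d → ℕ) (hp : p ∈ F) (hppos : 0 < coef p)
    (hvert : ∃ n : Fin d → ℝ,
      ∀ q ∈ convexHull ℝ ((fun v : Fin d → ℕ => fun i => (v i : ℝ)) '' F),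
        q ≠ (fun i => (p i : ℝ)) → ∑ i, n i * (p i : ℝ) > ∑ i, n i * q i)
    (hone : (∑ q ∈ F, coef q * ∏ i, (1 : ℝ) ^ q i) < 0) :
    ∃ x : Fin d → ℝ, (∀ i, 0 < x i) ∧ ∑ q ∈ F, coef q * ∏ i, x i ^ q i = 0 := by
  obtain ⟨n, hn⟩ := hvert
  have hmax : ∀ q ∈ F, q ≠ p → ∑ i, n i * (q i : ℝ) < ∑ i, n i * (p i : ℝ) := fun q hq hqp =>
    hn _ (subset_convexHull ℝ _ ⟨q, hq, rfl⟩) fun h =>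
      hqp (funext fun i => by exact_mod_cast congrFun h i)
  obtain ⟨a, ha, hroot⟩ := exists_gt_one_sum_mul_rpow_eq_zero F coef _ hp hppos hmax
    (by simpa only [one_pow, prod_const_one, mul_one] using hone)
  have ha0 : 0 < a := by linarith
  refine ⟨fun i => a ^ n i, fun i => Real.rpow_pos_of_pos ha0 _, ?_⟩
  simpa only [prod_rpow_pow_eq_rpow_sum ha0] using hroot

/-- If f has a positive coefficient f_p > 0 at a vertex p of its Newton
polytope and f(1,…,1) < 0, then f has a zero with all coordinates strictly positive. -/
theorem subtropical_root_finding {d : ℕ} (F : Finset (Fin d → ℕ))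
    (coef : (Fin d → ℕ) → ℝ) (hcoef : ∀ q ∈ F, coef q ≠ 0)
    (p : Fin d → ℕ) (hp : p ∈ F) (hppos : 0 < coef p)
    (hvert : ∃ n : Fin d → ℝ,
      ∀ q ∈ convexHull ℝ ((fun v : Fin d → ℕ => fun i => (v i : ℝ)) '' F),
        q ≠ (fun i => (p i : ℝ)) → ∑ i, n i * (p i : ℝ) > ∑ i, n i * q i)
    (hone : (∑ q ∈ F, coef q * ∏ i, (1 : ℝ) ^ q i) < 0) :
    ∃ x : Fin d → ℝ, (∀ i, 0 < x i) ∧ ∑ q ∈ F, coef q * ∏ i, x i ^ q i = 0 :=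
  subtropical_root_finding_general F coef p hp hppos hvert hone
end

section
/- Let F ⊂ ℕ^d be finite and p ∈ F. Then p is a vertex of conv(F) (with respect to some n ∈ ℝ^d) if and only if there exists a monotonic total preorder ⪯ on ℤ^d such that p is the strict maximum of F with respect to ⪯, i.e., q ≺ p for all q ∈ F \ {p}. -/
/-!
A vector `n` gives the monotonic preorder `x ⪯ y ↔ n ⬝ᵥ x ≤ n ⬝ᵥ y`, and `p` is the strict
maximum of `F` for it exactly when `n` exposes `p`. Conversely, for a monotonic preorder the
differences `p - q`, `q ∈ F \ {p}`, are strictly positive, hence so is every nonempty sum of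
them with positive integer multiplicities; in particular no such sum vanishes. If `0` were in
their real convex hull, Carathéodory would give an affinely independent subfamily with
positive weights; its integer linear relations are then real multiples of the weights, which
yields a vanishing sum with positive integer multiplicities. So `0` can be strictly separated
from the hull by some `n`, and this `n` exposes `p`.
-/

theorem lt_of_mem_convexHull_of_ne {E : Type*} [AddCommGroup E] [Module ℝ E]
    (ℓ : E →ₗ[ℝ] ℝ) {s : Set E} {p x : E} (hs : ∀ q ∈ s, q ≠ p → ℓ q < ℓ p)
    (hx : x ∈ convexHull ℝ s) (hxp : x ≠ p) : ℓ x < ℓ p := by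
  have hx' := convexHull_mono (Set.subset_insert_sdiff_singleton p s) hx
  rcases (s \ {p}).eq_empty_or_nonempty with hempty | hne
  · rw [hempty, insert_empty_eq, convexHull_singleton] at hx'
    exact absurd hx' hxp
  rw [convexHull_insert hne, convexJoin_singleton_left, Set.mem_iUnion₂] at hx'
  obtain ⟨y, hy, a, b, ha, hb, hab, rfl⟩ := hx'
  have hyp : ℓ y < ℓ p :=
    convexHull_min (fun q hq ↦ hs q hq.1 hq.2) (convex_halfSpace_lt ℓ.isLinear (ℓ p)) hy
  have hb : 0 < b := by
    refine hb.lt_of_ne fun hb ↦ hxp ?_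
    rw [← hb, add_zero] at hab
    simp [← hb, hab]
  obtain rfl : a = 1 - b := by linarith
  simp only [map_add, map_smul, smul_eq_mul]
  nlinarith

theorem exists_dotProduct_pos_of_zero_notMem_convexHull {ι : Type*} [Fintype ι]
    {s : Set (ι → ℝ)} (hs : s.Finite) (h0 : 0 ∉ convexHull ℝ s) :
    ∃ n : ι → ℝ, ∀ u ∈ s, 0 < n ⬝ᵥ u := by
  classical
  obtain ⟨f, c, hf0, hfc⟩ :=
    geometric_hahn_banach_point_closed (convex_convexHull ℝ s) (hs.isClosed_convexHull ℝ) h0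
  refine ⟨(dotProductEquiv ℝ ι).symm f.toLinearMap, fun u hu ↦ ?_⟩
  have hfu : f u = (dotProductEquiv ℝ ι).symm f.toLinearMap ⬝ᵥ u := by
    rw [← dotProductEquiv_apply_apply, LinearEquiv.apply_symm_apply]
    rfl
  rw [← hfu]
  rw [map_zero] at hf0
  exact hf0.trans (hfc u (subset_convexHull ℝ s hu))

theorem AddSubsemigroup.nsmul_mem {G : Type*} [AddMonoid G] (S : AddSubsemigroup G) {x : G}
    (hx : x ∈ S) {n : ℕ} (hn : 0 < n) : n • x ∈ S := by
  induction n, hn using Nat.le_induction with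
  | base => simpa using hx
  | succ n _ ih => rw [succ_nsmul]; exact S.add_mem ih hx

theorem AddSubsemigroup.sum_nsmul_mem {G κ : Type*} [AddCommMonoid G] [Fintype κ]
    [Nonempty κ] (S : AddSubsemigroup G) {v : κ → G} {c : κ → ℕ} (hv : ∀ i, v i ∈ S)
    (hc : ∀ i, 0 < c i) :
    ∑ i, c i • v i ∈ S :=
  Finset.sum_induction_nonempty _ (· ∈ S) (fun _ _ ↦ S.add_mem) Finset.univ_nonempty
    fun i _ ↦ S.nsmul_mem (hv i) (hc i)

theorem exists_pos_nat_relation_of_affineIndependent {κ ι : Type*} [Fintype κ] [Nonempty κ]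
    [Finite ι] {v : κ → ι → ℤ} {w : κ → ℝ}
    (hai : AffineIndependent ℝ fun i j ↦ (v i j : ℝ)) (hw : ∀ i, 0 < w i) (hw1 : ∑ i, w i = 1)
    (hwv : ∑ i, w i • (fun j ↦ (v i j : ℝ)) = 0) :
    ∃ c : κ → ℕ, (∀ i, 0 < c i) ∧ ∑ i, c i • v i = 0 := by
  have hdep : ¬ LinearIndependent ℤ v := by
    rw [← linearIndependent_algebraMap_comp_iff (S := ℝ)]
    intro hli
    obtain ⟨i⟩ := ‹Nonempty κ›
    exact (hw i).ne'
      (Fintype.linearIndependent_iff.mp hli w (by simpa [Function.comp_def] using hwv) i)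
  obtain ⟨g, hg, i₀, hi₀⟩ := Fintype.not_linearIndependent_iff.mp hdep
  have hgℝ : ∑ i, (g i : ℝ) • (fun j ↦ (v i j : ℝ)) = 0 := by
    ext j
    simpa [Finset.sum_apply] using congr_arg (fun x : ι → ℤ ↦ (x j : ℝ)) hg
  set S := ∑ i, (g i : ℝ)
  -- `g - S • w` has total weight `0` and combines the points to `0`.
  have hgw : ∀ i, (g i : ℝ) = S * w i := by
    intro i
    refine sub_eq_zero.mp (hai.eq_zero_of_sum_eq_zero (s := Finset.univ)
      (w := fun k ↦ g k - S * w k) ?_ ?_ i (Finset.mem_univ i))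
    · simp [Finset.sum_sub_distrib, ← Finset.mul_sum, hw1, S]
    · simp [sub_smul, Finset.sum_sub_distrib, mul_smul, ← Finset.smul_sum, hwv, hgℝ]
  have hS : S ≠ 0 := fun hS ↦ hi₀ <| by
    have := hgw i₀
    rwa [hS, zero_mul, Int.cast_eq_zero] at this
  obtain ⟨h, hh, hpos⟩ : ∃ h : κ → ℤ, ∑ i, h i • v i = 0 ∧ ∀ i, 0 < h i := by
    rcases hS.lt_or_gt with hS | hS
    · refine ⟨-g, by simp only [Pi.neg_apply, neg_smul, Finset.sum_neg_distrib, hg, neg_zero],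
        fun i ↦ ?_⟩
      have : (0 : ℝ) < -g i := by rw [hgw]; nlinarith [hw i]
      exact_mod_cast this
    · exact ⟨g, hg, fun i ↦ by exact_mod_cast (hgw i).symm ▸ mul_pos hS (hw i)⟩
  refine ⟨fun i ↦ (h i).toNat, fun i ↦ by simpa using hpos i, ?_⟩
  simp_rw [← natCast_zsmul, Int.toNat_of_nonneg (hpos _).le, hh]

theorem zero_mem_closure_of_zero_mem_convexHull {ι : Type*} [Finite ι] {V : Set (ι → ℤ)}
    (h : 0 ∈ convexHull ℝ ((fun v i ↦ (v i : ℝ)) '' V)) : 0 ∈ AddSubsemigroup.closure V := by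
  obtain ⟨κ, _, z, w, hzV, hai, hw, hw1, hwz⟩ := eq_pos_convex_span_of_mem_convexHull h
  have : Nonempty κ := by
    by_contra hκ
    simp [not_nonempty_iff.mp hκ] at hw1
  choose v hvV hvz using fun i ↦ hzV (Set.mem_range_self i)
  obtain rfl : (fun i j ↦ (v i j : ℝ)) = z := funext hvz
  obtain ⟨c, hc, hcv⟩ := exists_pos_nat_relation_of_affineIndependent hai hw hw1 hwz
  rw [← hcv]
  exact AddSubsemigroup.sum_nsmul_mem _ (fun i ↦ AddSubsemigroup.subset_closure (hvV i)) hc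

section MonotonePreorder

variable {G : Type*} (r : G → G → Prop)

def strictPosSubsemigroup [AddCommMonoid G] (htrans : ∀ x y z, r x y → r y z → r x z)
    (hmono : ∀ x y z, r x y → r (x + z) (y + z)) : AddSubsemigroup G where
  carrier := {x | r 0 x ∧ ¬ r x 0}
  add_mem' := by
    rintro x y ⟨hx, hx'⟩ ⟨hy, hy'⟩
    have hyxy : r y (x + y) := by simpa using hmono 0 x y hx
    exact ⟨htrans _ _ _ hy hyxy, fun hxy ↦ hy' (htrans _ _ _ hyxy hxy)⟩

theorem sub_mem_strictPosSubsemigroup [AddCommGroup G]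
    (htrans : ∀ x y z, r x y → r y z → r x z) (hmono : ∀ x y z, r x y → r (x + z) (y + z))
    {x y : G} (hxy : r x y) (hyx : ¬ r y x) : y - x ∈ strictPosSubsemigroup r htrans hmono :=
  ⟨by simpa [sub_eq_add_neg] using hmono x y (-x) hxy,
    fun h ↦ hyx (by simpa using hmono (y - x) 0 x h)⟩

end MonotonePreorder

theorem exists_dotProduct_pos_of_subset_strictPosSubsemigroup {ι : Type*} [Fintype ι]
    (r : (ι → ℤ) → (ι → ℤ) → Prop) (hrefl : ∀ x, r x x)
    (htrans : ∀ x y z, r x y → r y z → r x z) (hmono : ∀ x y z, r x y → r (x + z) (y + z))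
    {V : Set (ι → ℤ)} (hV : V.Finite) (hpos : V ⊆ strictPosSubsemigroup r htrans hmono) :
    ∃ n : ι → ℝ, ∀ v ∈ V, 0 < n ⬝ᵥ fun i ↦ (v i : ℝ) := by
  have h0 : 0 ∉ convexHull ℝ ((fun v i ↦ (v i : ℝ)) '' V) := fun h ↦
    (AddSubsemigroup.closure_le.mpr hpos (zero_mem_closure_of_zero_mem_convexHull h)).2
      (hrefl 0)
  obtain ⟨n, hn⟩ := exists_dotProduct_pos_of_zero_notMem_convexHull (hV.image _) h0
  exact ⟨n, fun v hv ↦ hn _ (Set.mem_image_of_mem _ hv)⟩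

theorem vertex_iff_preorder_max_general {d : ℕ} (F : Finset (Fin d → ℕ))
    (p : Fin d → ℕ) :
    (∃ n : Fin d → ℝ,
      ∀ q ∈ convexHull ℝ ((fun v : Fin d → ℕ => fun i => (v i : ℝ)) '' F),
        q ≠ (fun i => (p i : ℝ)) → ∑ i, n i * (p i : ℝ) > ∑ i, n i * q i) ↔
    (∃ r : (Fin d → ℤ) → (Fin d → ℤ) → Prop,
      (∀ x, r x x) ∧
      (∀ x y z, r x y → r y z → r x z) ∧
      (∀ x y, r x y ∨ r y x) ∧
      (∀ x y z, r x y → r (x + z) (y + z)) ∧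
      (∀ q ∈ F, q ≠ p →
        r (fun i => (q i : ℤ)) (fun i => (p i : ℤ)) ∧
        ¬ r (fun i => (p i : ℤ)) (fun i => (q i : ℤ)))) := by
  constructor
  · rintro ⟨n, hn⟩
    refine ⟨fun x y ↦ n ⬝ᵥ (fun i ↦ (x i : ℝ)) ≤ n ⬝ᵥ fun i ↦ (y i : ℝ), fun _ ↦ le_rfl,
      fun _ _ _ ↦ le_trans, fun _ _ ↦ le_total _ _, fun x y z h ↦ ?_, fun q hq hqp ↦ ?_⟩
    · simpa [← Pi.add_def, dotProduct_add] using h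
    · have hcast : (fun i ↦ (q i : ℝ)) ≠ fun i ↦ (p i : ℝ) :=
        fun h ↦ hqp (funext fun i ↦ by exact_mod_cast congr_fun h i)
      have := hn _ (subset_convexHull ℝ _ ⟨q, hq, rfl⟩) hcast
      simp only [Int.cast_natCast]
      exact ⟨this.le, not_le.mpr this⟩
  · rintro ⟨r, hrefl, htrans, -, hmono, hmax⟩
    classical
    set V := (F.filter (· ≠ p)).image fun q i ↦ (p i : ℤ) - q i
    have hV : (V : Set (Fin d → ℤ)) ⊆ strictPosSubsemigroup r htrans hmono := by
      simp only [V, Finset.coe_image, Finset.coe_filter, Set.image_subset_iff]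
      exact fun q ⟨hq, hqp⟩ ↦ sub_mem_strictPosSubsemigroup r htrans hmono (hmax q hq hqp).1
        (hmax q hq hqp).2
    obtain ⟨n, hn⟩ := exists_dotProduct_pos_of_subset_strictPosSubsemigroup r hrefl htrans hmono
      V.finite_toSet hV
    refine ⟨n, fun x hx hxp ↦
      lt_of_mem_convexHull_of_ne (dotProductEquiv ℝ (Fin d) n) ?_ hx hxp⟩
    rintro _ ⟨q, hq, rfl⟩ hqp
    have hqV : (fun i ↦ (p i : ℤ) - q i) ∈ V :=
      Finset.mem_image_of_mem _ (Finset.mem_filter.mpr ⟨hq, fun h ↦ hqp (h ▸ rfl)⟩)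
    simpa [← Pi.sub_def, dotProduct_sub] using hn _ hqV

/-- p ∈ F ⊂ ℕ^d is a vertex of conv(F) w.r.t. some n ∈ ℝ^d iff there is a
monotonic total preorder ⪯ on ℤ^d such that p is the strict maximum of F w.r.t. ⪯. -/
theorem vertex_iff_preorder_max {d : ℕ} (F : Finset (Fin d → ℕ))
    (p : Fin d → ℕ) (hp : p ∈ F) :
    (∃ n : Fin d → ℝ,
      ∀ q ∈ convexHull ℝ ((fun v : Fin d → ℕ => fun i => (v i : ℝ)) '' F),
        q ≠ (fun i => (p i : ℝ)) → ∑ i, n i * (p i : ℝ) > ∑ i, n i * q i) ↔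
    (∃ r : (Fin d → ℤ) → (Fin d → ℤ) → Prop,
      (∀ x, r x x) ∧
      (∀ x y z, r x y → r y z → r x z) ∧
      (∀ x y, r x y ∨ r y x) ∧
      (∀ x y z, r x y → r (x + z) (y + z)) ∧
      (∀ q ∈ F, q ≠ p →
        r (fun i => (q i : ℤ)) (fun i => (p i : ℤ)) ∧
        ¬ r (fun i => (p i : ℤ)) (fun i => (q i : ℤ)))) :=
  vertex_iff_preorder_max_general F p
end

section
/- Let f be a polynomial in d variables with frame F, positive frame F⁺ and negative frame F⁻. The following are equivalent: (i) some p ∈ F⁺ is a vertex of conv(F) with respect to some n ∈ ℝ^d; (ii) some p' ∈ F⁺ is a vertex of conv(F⁻ ∪ {p'}) with respect to some n' ∈ ℝ^d. -/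
/-!
Choose `K` so large that `ψ x = K (n' ⬝ᵥ x) + x ⬝ᵥ x` is larger at `p'` than at every point
of `F⁻`. A maximizer `p` of `ψ` on `F` then lies in `F⁺`, and since `ψ` is strictly convex, `p` is
the unique maximizer on `F` of the linear functional given by the gradient `K n' + 2 p` of `ψ`
at `p`.
-/

open Filter

section

variable {R ι : Type*} [Fintype ι]

theorem dotProduct_self_pos [CommRing R] [LinearOrder R] [IsStrictOrderedRing R]
    {v : ι → R} (hv : v ≠ 0) : 0 < v ⬝ᵥ v :=
  (Finset.sum_nonneg fun i _ => mul_self_nonneg (v i)).lt_of_ne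
    (Ne.symm (dotProduct_self_eq_zero.not.mpr hv))

/-- The two sides differ by at least `(p - q) ⬝ᵥ (p - q)`. -/
theorem add_two_nsmul_dotProduct_lt_of_le_of_ne
    [CommRing R] [LinearOrder R] [IsStrictOrderedRing R] {v p q : ι → R}
    (hle : v ⬝ᵥ q + q ⬝ᵥ q ≤ v ⬝ᵥ p + p ⬝ᵥ p) (hqp : q ≠ p) :
    (v + 2 • p) ⬝ᵥ q < (v + 2 • p) ⬝ᵥ p := by
  have hgap : 0 < (p - q) ⬝ᵥ (p - q) := dotProduct_self_pos (sub_ne_zero.mpr hqp.symm)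
  simp only [two_nsmul, add_dotProduct, sub_dotProduct, dotProduct_sub, dotProduct_comm q p]
    at hgap ⊢
  linarith

theorem Finset.exists_lt_mul_of_pos [Field R] [LinearOrder R] [IsStrictOrderedRing R]
    {α : Type*} (s : Finset α) (a b : α → R) (ha : ∀ i ∈ s, 0 < a i) :
    ∃ K, ∀ i ∈ s, b i < K * a i :=
  ((eventually_all_finset s).mpr fun i hi =>
    (tendsto_id.atTop_mul_const (ha i hi)).eventually_gt_atTop (b i)).exists

theorem exists_vertex_notMem_of_dotProduct_lt [Field R] [LinearOrder R] [IsStrictOrderedRing R]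
    {α : Type*} {x : α → ι → R} (hx : Function.Injective x) {S N : Finset α} {p' : α}
    {n' : ι → R} (hp'S : p' ∈ S) (hN : ∀ q ∈ N, n' ⬝ᵥ x q < n' ⬝ᵥ x p') :
    ∃ p ∈ S, p ∉ N ∧ ∃ n : ι → R, ∀ q ∈ S, q ≠ p → n ⬝ᵥ x q < n ⬝ᵥ x p := by
  obtain ⟨K, hK⟩ := N.exists_lt_mul_of_pos (fun q => n' ⬝ᵥ x p' - n' ⬝ᵥ x q)
    (fun q => x q ⬝ᵥ x q - x p' ⬝ᵥ x p') fun q hq => sub_pos.mpr (hN q hq)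
  set ψ : (ι → R) → R := fun y => (K • n') ⬝ᵥ y + y ⬝ᵥ y
  have hψN : ∀ q ∈ N, ψ (x q) < ψ (x p') := fun q hq => by
    have := hK q hq
    simp only [ψ, smul_dotProduct, smul_eq_mul]
    linarith
  obtain ⟨p, hpS, hpmax⟩ := S.exists_max_image (fun a => ψ (x a)) ⟨p', hp'S⟩
  refine ⟨p, hpS, fun hpN => (hψN p hpN).not_ge (hpmax p' hp'S), K • n' + 2 • x p,
    fun q hqS hqp => add_two_nsmul_dotProduct_lt_of_le_of_ne (hpmax q hqS) (hx.ne hqp)⟩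

end

/-- Some p ∈ F⁺ is a vertex of conv(F) w.r.t. some n iff some p' ∈ F⁺ is
a vertex of conv(F⁻ ∪ {p'}) w.r.t. some n'. -/
theorem positive_vertex_iff_vertex_wrt_negative_frame {d : ℕ}
    (F : Finset (Fin d → ℕ)) (coef : (Fin d → ℕ) → ℝ)
    (hcoef : ∀ q ∈ F, coef q ≠ 0) :
    (∃ p ∈ F.filter (fun q => 0 < coef q), ∃ n : Fin d → ℝ,
      ∀ q ∈ F, q ≠ p → ∑ i, n i * (p i : ℝ) > ∑ i, n i * (q i : ℝ)) ↔
    (∃ p' ∈ F.filter (fun q => 0 < coef q), ∃ n' : Fin d → ℝ,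
      ∀ q ∈ F.filter (fun q => coef q < 0), q ≠ p' →
        ∑ i, n' i * (p' i : ℝ) > ∑ i, n' i * (q i : ℝ)) := by
  constructor
  · rintro ⟨p, hp, n, hn⟩
    exact ⟨p, hp, n, fun q hq => hn q (Finset.mem_of_mem_filter q hq)⟩
  · rintro ⟨p', hp', n', hn'⟩
    rw [Finset.mem_filter] at hp'
    have hcast : Function.Injective fun (q : Fin d → ℕ) => ((↑) ∘ q : Fin d → ℝ) :=
      Nat.cast_injective.comp_left
    obtain ⟨p, hpF, hpN, n, hn⟩ := exists_vertex_notMem_of_dotProduct_lt hcast hp'.1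
      (N := F.filter (fun q => coef q < 0))
      fun q hq => hn' q hq (by rintro rfl; exact (Finset.mem_filter.mp hq).2.not_gt hp'.2)
    have hpos : 0 < coef p :=
      (hcoef p hpF).lt_or_gt.resolve_left fun h => hpN (Finset.mem_filter.mpr ⟨hpF, h⟩)
    exact ⟨p, Finset.mem_filter.mpr ⟨hpF, hpos⟩, n, hn⟩
end

section
/- Let f be a polynomial with frame F, positive frame F⁺ and negative frame F⁻. Some p ∈ F⁺ is a vertex of the Newton polytope conv(F) if and only if there exist n ∈ ℝ^d and c ∈ ℝ such that (∨_{p ∈ F⁺} nᵀp + c > 0) ∧ (∧_{q ∈ F⁻} nᵀq + c < 0). -/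
/-!
If `p ∈ F⁺` is exposed by `n`, every point of `F⁻` lies strictly below the level `nᵀp`, and a
threshold `-c` between `nᵀp` and the finitely many `nᵀq`, `q ∈ F⁻`, gives the encoding.
Conversely, the points of `F` maximising `nᵀ·` lie above the threshold, so they are not negative,
hence positive; among them the one of largest Euclidean norm is a vertex of `conv F`, exposed by
`K • n + p` for large `K`, since on the face `qᵀp < pᵀp` by strict convexity of the norm.
-/

open Filter

theorem Finset.exists_lt_forall_lt {α β : Type*} [LinearOrder β] [DenselyOrdered β]
    [NoMinOrder β] (s : Finset α) (f : α → β) {a : β} (h : ∀ x ∈ s, f x < a) :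
    ∃ b < a, ∀ x ∈ s, f x < b := by
  classical
  induction s using Finset.induction_on with
  | empty => simpa using exists_lt a
  | insert y s _ ih =>
    obtain ⟨b, hba, hb⟩ := ih fun x hx => h x (Finset.mem_insert_of_mem hx)
    obtain ⟨b', hb', hb'a⟩ := _root_.exists_between (max_lt hba (h y (Finset.mem_insert_self y s)))
    refine ⟨b', hb'a, Finset.forall_mem_insert _ _ _ |>.2 ⟨?_, fun x hx => ?_⟩⟩
    · exact (le_max_right _ _).trans_lt hb'
    · exact (hb x hx).trans ((le_max_left _ _).trans_lt hb')

theorem Finset.exists_strict_max_mul_add_of_lex {α : Type*} (s : Finset α) (f g : α → ℝ)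
    {p : α} (hf : ∀ q ∈ s, f q ≤ f p) (hg : ∀ q ∈ s, q ≠ p → f q = f p → g q < g p) :
    ∃ K : ℝ, ∀ q ∈ s, q ≠ p → K * f q + g q < K * f p + g p := by
  have hq : ∀ q ∈ s, ∀ᶠ K : ℝ in atTop, q ≠ p → K * f q + g q < K * f p + g p := by
    intro q hqs
    rcases (hf q hqs).lt_or_eq with hlt | heq
    · have hK : ∀ᶠ K : ℝ in atTop, g q - g p < K * (f p - f q) :=
        (tendsto_id.atTop_mul_const (sub_pos.2 hlt)).eventually_gt_atTop _
      filter_upwards [hK] with K hK _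
      linarith
    · exact .of_forall fun K hqp => by rw [heq]; linarith [hg q hqs hqp heq]
  exact ((eventually_all_finset s).2 hq).exists

theorem dotProduct_lt_dotProduct_self {ι : Type*} [Fintype ι] {v w : ι → ℝ}
    (hw : w ⬝ᵥ w ≤ v ⬝ᵥ v) (hne : w ≠ v) : v ⬝ᵥ w < v ⬝ᵥ v := by
  have hpos : 0 < (v - w) ⬝ᵥ (v - w) :=
    lt_of_le_of_ne (dotProduct_self_star_nonneg _) (Ne.symm (dotProduct_self_eq_zero.not.2
      (sub_ne_zero.2 hne.symm)))
  simp only [sub_dotProduct, dotProduct_sub, dotProduct_comm w v] at hpos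
  linarith

theorem Finset.exists_exposed_maximizer {α ι : Type*} [Fintype ι] (s : Finset α)
    (hs : s.Nonempty) {v : α → ι → ℝ} (hv : Function.Injective v) (n : ι → ℝ) :
    ∃ p ∈ s, (∀ q ∈ s, n ⬝ᵥ v q ≤ n ⬝ᵥ v p) ∧
      ∃ n' : ι → ℝ, ∀ q ∈ s, q ≠ p → n' ⬝ᵥ v q < n' ⬝ᵥ v p := by
  obtain ⟨p, hps, hp⟩ := s.exists_max_image (fun q => toLex (n ⬝ᵥ v q, v q ⬝ᵥ v q)) hs
  simp only [Prod.Lex.toLex_le_toLex] at hp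
  have hf : ∀ q ∈ s, n ⬝ᵥ v q ≤ n ⬝ᵥ v p := fun q hq =>
    (hp q hq).elim le_of_lt fun h => h.1.le
  have hg : ∀ q ∈ s, q ≠ p → n ⬝ᵥ v q = n ⬝ᵥ v p → v p ⬝ᵥ v q < v p ⬝ᵥ v p :=
    fun q hq hqp heq => dotProduct_lt_dotProduct_self
      ((hp q hq).resolve_left heq.not_lt).2 (hv.ne hqp)
  obtain ⟨K, hK⟩ := s.exists_strict_max_mul_add_of_lex _ _ hf hg
  refine ⟨p, hps, hf, K • n + v p, fun q hq hqp => ?_⟩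
  simpa only [add_dotProduct, smul_dotProduct, smul_eq_mul] using hK q hq hqp

/-- Some p ∈ F⁺ is a vertex of conv(F) iff there exist n and c with
(∨_{p ∈ F⁺} nᵀp + c > 0) ∧ (∧_{q ∈ F⁻} nᵀq + c < 0). -/
theorem positive_vertex_iff_linear_encoding {d : ℕ}
    (F : Finset (Fin d → ℕ)) (coef : (Fin d → ℕ) → ℝ)
    (hcoef : ∀ q ∈ F, coef q ≠ 0) :
    (∃ p ∈ F.filter (fun q => 0 < coef q), ∃ n : Fin d → ℝ,
      ∀ q ∈ F, q ≠ p → ∑ i, n i * (p i : ℝ) > ∑ i, n i * (q i : ℝ)) ↔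
    (∃ (n : Fin d → ℝ) (c : ℝ),
      (∃ p ∈ F.filter (fun q => 0 < coef q), (∑ i, n i * (p i : ℝ)) + c > 0) ∧
      (∀ q ∈ F.filter (fun q => coef q < 0), (∑ i, n i * (q i : ℝ)) + c < 0)) := by
  simp only [Finset.mem_filter]
  constructor
  · rintro ⟨p, ⟨hpF, hp⟩, n, hsep⟩
    obtain ⟨b, hbp, hb⟩ := (F.filter (coef · < 0)).exists_lt_forall_lt
      (fun q => ∑ i, n i * (q i : ℝ)) (a := ∑ i, n i * (p i : ℝ)) fun q hq =>
        have hq := Finset.mem_filter.1 hq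
        hsep q hq.1 (by rintro rfl; linarith [hq.2])
    exact ⟨n, -b, ⟨p, ⟨hpF, hp⟩, by linarith⟩, fun q hq => by
      linarith [hb q (Finset.mem_filter.2 hq)]⟩
  · rintro ⟨n, c, ⟨p₀, ⟨hp₀, -⟩, hp₀c⟩, hneg⟩
    obtain ⟨p, hpF, hmax, n', hsep⟩ := F.exists_exposed_maximizer ⟨p₀, hp₀⟩
      (v := fun q i => (q i : ℝ)) (fun _ _ h => funext fun i => Nat.cast_injective (congrFun h i)) n
    have hp₀p : ∑ i, n i * (p₀ i : ℝ) ≤ ∑ i, n i * (p i : ℝ) := hmax p₀ hp₀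
    have hp : 0 < coef p := (hcoef p hpF).lt_or_gt.resolve_left fun h => by
      linarith [hneg p ⟨hpF, h⟩]
    exact ⟨p, ⟨hpF, hp⟩, n', hsep⟩
end

section
/- Let f₁,…,f_m be polynomials in d variables over ℝ. The family {f_i} has a positive vertex cluster with respect to some n ∈ ℝ^d if and only if there exist n ∈ ℝ^d and c₁,…,c_m ∈ ℝ such that for every i: (∨_{p ∈ frame⁺(f_i)} nᵀp + c_i > 0) ∧ (∧_{q ∈ frame⁻(f_i)} nᵀq + c_i < 0). -/
/-!
Forward: if `p i` is the strict maximiser of `q ↦ nᵀq` on `F i`, every negative exponent lies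
strictly below `nᵀ(p i)`, so a threshold `-c i` between them exists.

Backward: perturb `n` to `n + ε w`, where `w = (1, B, B², …)` with `B` above every coordinate,
so that `wᵀq` is the base-`B` number with digits `q` and hence injective. For small `ε > 0` the
new functional keeps every strict inequality of `nᵀ·` on the finitely many exponents and separates
all of them, so it has a strict maximiser on each `F i`. That maximiser is positive: a negative
one would lie below the threshold, hence below the positive exponent above it.
-/

open Filter Topology Finset

section Separation

variable {α : Type*}

theorem exists_threshold_of_isStrictMax {F : Finset α} {coef φ : α → ℝ} {p : α}
    (hp : p ∈ F.filter (fun q => 0 < coef q)) (hmax : ∀ q ∈ F, q ≠ p → φ q < φ p) :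
    ∃ c : ℝ, (∃ p ∈ F.filter (fun q => 0 < coef q), φ p + c > 0) ∧
      ∀ q ∈ F.filter (fun q => coef q < 0), φ q + c < 0 := by
  have hneg_lt : ∀ x ∈ (F.filter (fun q => coef q < 0)).image φ,
      ∀ y ∈ ({φ p} : Finset ℝ), x < y := by
    simp only [mem_image, mem_filter, mem_singleton]
    rintro _ ⟨q, ⟨hqF, hq⟩, rfl⟩ _ rfl
    exact hmax q hqF (by rintro rfl; exact (mem_filter.1 hp).2.not_gt hq)
  obtain ⟨t, hlo, hhi⟩ := Order.exists_between_finsets _ _ hneg_lt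
  refine ⟨-t, ⟨p, hp, by linarith [hhi _ (mem_singleton_self _)]⟩, fun q hq => ?_⟩
  linarith [hlo _ (mem_image_of_mem φ hq)]

theorem exists_positive_isStrictMax {F : Finset α} {coef φ ψ : α → ℝ} {c : ℝ}
    (hcoef : ∀ q ∈ F, coef q ≠ 0)
    (hpos : ∃ p ∈ F.filter (fun q => 0 < coef q), ψ p + c > 0)
    (hneg : ∀ q ∈ F.filter (fun q => coef q < 0), ψ q + c < 0)
    (hrefine : ∀ q ∈ F, ∀ q' ∈ F, ψ q < ψ q' → φ q < φ q') (hinj : Set.InjOn φ F) :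
    ∃ p ∈ F.filter (fun q => 0 < coef q), ∀ q ∈ F, q ≠ p → φ q < φ p := by
  obtain ⟨p₀, hp₀, hp₀c⟩ := hpos
  have hp₀F := (mem_filter.1 hp₀).1
  obtain ⟨p, hpF, hmax⟩ := F.exists_max_image φ ⟨p₀, hp₀F⟩
  have hstrict : ∀ q ∈ F, q ≠ p → φ q < φ p := fun q hqF hqp =>
    (hmax q hqF).lt_of_ne fun h => hqp (hinj hqF hpF h)
  refine ⟨p, mem_filter.2 ⟨hpF, ?_⟩, hstrict⟩
  by_contra hnot
  have hpneg : ψ p + c < 0 :=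
    hneg p (mem_filter.2 ⟨hpF, (hcoef p hpF).lt_of_le (not_lt.1 hnot)⟩)
  exact (hrefine p hpF p₀ hp₀F (by linarith)).not_ge (hmax p₀ hp₀F)

theorem exists_pos_add_smul_refines_injOn (S : Finset α) (f g : α → ℝ)
    (hg : Set.InjOn g S) :
    ∃ ε > 0, (∀ q ∈ S, ∀ q' ∈ S, f q < f q' → f q + ε * g q < f q' + ε * g q') ∧
      Set.InjOn (fun q => f q + ε * g q) S := by
  have hlim : ∀ q, Tendsto (fun ε : ℝ => f q + ε * g q) (𝓝[>] 0) (𝓝 (f q)) := fun q => by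
    have : Continuous fun ε : ℝ => f q + ε * g q := by fun_prop
    simpa using this.continuousWithinAt.tendsto (x := 0) (s := Set.Ioi 0)
  have hpair : ∀ q ∈ S, ∀ q' ∈ S, ∀ᶠ ε in 𝓝[>] (0 : ℝ),
      (f q < f q' → f q + ε * g q < f q' + ε * g q') ∧
        (f q + ε * g q = f q' + ε * g q' → q = q') := by
    intro q hq q' hq'
    rcases lt_trichotomy (f q) (f q') with hlt | heq | hgt
    · exact ((hlim q).eventually_lt (hlim q') hlt).mono fun ε h =>
        ⟨fun _ => h, fun he => absurd he h.ne⟩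
    · filter_upwards [self_mem_nhdsWithin] with ε (hε : 0 < ε)
      refine ⟨fun h => absurd heq h.ne, fun he => hg hq hq' (mul_left_cancel₀ hε.ne' ?_)⟩
      linarith
    · exact ((hlim q').eventually_lt (hlim q) hgt).mono fun ε h =>
        ⟨fun h' => absurd hgt h'.not_gt, fun he => absurd he.symm h.ne⟩
  simp only [← eventually_all_finset] at hpair
  obtain ⟨ε, hε, hε0⟩ := (hpair.and self_mem_nhdsWithin).exists
  exact ⟨ε, hε0, fun q hq q' hq' => (hε q hq q' hq').1,
    fun q hq q' hq' => (hε q hq q' hq').2⟩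

end Separation

section Weight

variable {d : ℕ}

def weight (n : Fin d → ℝ) (q : Fin d → ℕ) : ℝ := ∑ j, n j * (q j : ℝ)

theorem weight_add_smul (n w : Fin d → ℝ) (ε : ℝ) (q : Fin d → ℕ) :
    weight (n + ε • w) q = weight n q + ε * weight w q := by
  simp only [weight, Pi.add_apply, Pi.smul_apply, smul_eq_mul, mul_sum, ← sum_add_distrib]
  exact sum_congr rfl fun j _ => by ring

theorem weight_basePowers_injOn (B : ℕ) :
    Set.InjOn (weight fun j : Fin d => (B : ℝ) ^ (j : ℕ)) {q | ∀ j, q j < B} := by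
  intro q hq q' hq' h
  have hdigits : (finFunctionFinEquiv fun j => (⟨q j, hq j⟩ : Fin B)) =
      finFunctionFinEquiv fun j => (⟨q' j, hq' j⟩ : Fin B) := by
    ext
    simp only [finFunctionFinEquiv_apply]
    exact_mod_cast (by simpa [weight, mul_comm] using h :
      ∑ j, (q j : ℝ) * (B : ℝ) ^ (j : ℕ) = ∑ j, (q' j : ℝ) * (B : ℝ) ^ (j : ℕ))
  funext j
  exact congrArg Fin.val (congrFun (finFunctionFinEquiv.injective hdigits) j)

theorem exists_weight_refines_injOn (S : Finset (Fin d → ℕ)) (n : Fin d → ℝ) :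
    ∃ n' : Fin d → ℝ,
      (∀ q ∈ S, ∀ q' ∈ S, weight n q < weight n q' → weight n' q < weight n' q') ∧
        Set.InjOn (weight n') S := by
  set B := S.sup (fun q => univ.sup q) + 1
  have hB : ∀ q ∈ S, ∀ j, q j < B := fun q hq j =>
    Nat.lt_succ_of_le <|
      (le_sup (f := q) (mem_univ j)).trans (le_sup (f := fun q => univ.sup q) hq)
  set w : Fin d → ℝ := fun j => (B : ℝ) ^ (j : ℕ)
  obtain ⟨ε, -, hrefine, hinj⟩ := exists_pos_add_smul_refines_injOn S (weight n) (weight w)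
    fun q hq q' hq' => weight_basePowers_injOn B (hB q hq) (hB q' hq')
  refine ⟨n + ε • w, ?_, ?_⟩
  · simpa only [weight_add_smul] using hrefine
  · simpa only [Set.InjOn, weight_add_smul] using hinj

end Weight

/-- {f_i} has a positive vertex cluster w.r.t. some n iff there exist n
and c₁,…,c_m such that for every i:
(∨_{p ∈ frame⁺(f_i)} nᵀp + c_i > 0) ∧ (∧_{q ∈ frame⁻(f_i)} nᵀq + c_i < 0). -/
theorem positive_vertex_cluster_iff_linear_encoding {d m : ℕ}
    (F : Fin m → Finset (Fin d → ℕ)) (coef : Fin m → (Fin d → ℕ) → ℝ)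
    (hcoef : ∀ i, ∀ q ∈ F i, coef i q ≠ 0) :
    (∃ (n : Fin d → ℝ) (p : Fin m → (Fin d → ℕ)),
      ∀ i : Fin m, p i ∈ (F i).filter (fun q => 0 < coef i q) ∧
        ∀ q ∈ F i, q ≠ p i → ∑ j, n j * (p i j : ℝ) > ∑ j, n j * (q j : ℝ)) ↔
    (∃ (n : Fin d → ℝ) (c : Fin m → ℝ), ∀ i : Fin m,
      (∃ p ∈ (F i).filter (fun q => 0 < coef i q),
        (∑ j, n j * (p j : ℝ)) + c i > 0) ∧
      (∀ q ∈ (F i).filter (fun q => coef i q < 0),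
        (∑ j, n j * (q j : ℝ)) + c i < 0)) := by
  constructor
  · rintro ⟨n, p, h⟩
    choose c hc using fun i => exists_threshold_of_isStrictMax (φ := weight n) (h i).1 (h i).2
    exact ⟨n, c, hc⟩
  · rintro ⟨n, c, h⟩
    have hsub : ∀ i, F i ⊆ univ.biUnion F := fun i => subset_biUnion_of_mem F (mem_univ i)
    obtain ⟨n', hrefine, hinj⟩ := exists_weight_refines_injOn (univ.biUnion F) n
    choose p hp hmax using fun i => exists_positive_isStrictMax (ψ := weight n) (hcoef i)
      (h i).1 (h i).2 (fun q hq q' hq' => hrefine q (hsub i hq) q' (hsub i hq'))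
      (hinj.mono (hsub i))
    exact ⟨n', p, fun i => ⟨hp i, hmax i⟩⟩
end

section
/- Let f₁,…,f_m be polynomials in d variables over ℝ, τ a sign variant, and suppose (p₁,…,p_m) is a positive vertex cluster of the polynomials τ(f₁),…,τ(f_m) with respect to n ∈ ℝ^d. Then there exists a₀ > 0 such that for all a ≥ a₀: f_i(τ(a)^n) > 0 for all i ∈ {1,…,m}, where τ(a) ∈ ℝ^d has i-th coordinate a if τ(x_i) = x_i and -a if τ(x_i) = -x_i. In particular the system ∧ f_i > 0 has a real solution (not necessarily with positive coordinates). -/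
/-!
Substituting `x = τ(a)^n` turns the monomial `x^q` into `±a^⟨n, q⟩`, the sign being
`(-1)^#{j | τ j, q j odd}`. Since `p i` is the unique maximiser of `⟨n, ·⟩` on the support of
`f_i`, dividing by `a^⟨n, p i⟩` leaves a sum tending to the signed coefficient of `p i` as
`a → ∞`, which is positive by assumption.
-/

open Filter Topology

theorem prod_ite_neg_one_pow_eq_neg_one_pow_card {ι : Type*} [Fintype ι]
    (τ : ι → Bool) (q : ι → ℕ) :
    ∏ j, (if τ j then (-1 : ℝ) else 1) ^ q j =
      (-1 : ℝ) ^ (Finset.univ.filter (fun j => τ j = true ∧ Odd (q j))).card := by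
  rw [Finset.card_filter, ← Finset.prod_pow_eq_pow_sum]
  refine Finset.prod_congr rfl fun j _ => ?_
  by_cases hτ : τ j = true
  · rcases Nat.even_or_odd (q j) with hq | hq
    · simp [hτ, hq.neg_one_pow, Nat.not_odd_iff_even.mpr hq]
    · simp [hτ, hq.neg_one_pow, hq]
  · simp [hτ]

theorem prod_signed_rpow_pow {ι : Type*} [Fintype ι] (τ : ι → Bool) (n : ι → ℝ)
    {a : ℝ} (ha : 0 < a) (q : ι → ℕ) :
    ∏ j, ((if τ j then (-1 : ℝ) else 1) * a ^ n j) ^ q j =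
      (-1 : ℝ) ^ (Finset.univ.filter (fun j => τ j = true ∧ Odd (q j))).card *
        a ^ ∑ j, n j * (q j : ℝ) := by
  have hfactor : ∀ j, ((if τ j then (-1 : ℝ) else 1) * a ^ n j) ^ q j =
      (if τ j then (-1 : ℝ) else 1) ^ q j * a ^ (n j * (q j : ℝ)) := fun j => by
    rw [mul_pow, ← Real.rpow_natCast (a ^ n j), ← Real.rpow_mul ha.le]
  rw [Finset.prod_congr rfl fun j _ => hfactor j, Finset.prod_mul_distrib,
    prod_ite_neg_one_pow_eq_neg_one_pow_card, ← Real.rpow_sum_of_pos ha]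

section DominantExponent

variable {κ : Type*} {S : Finset κ} {c e : κ → ℝ} {p : κ}

theorem tendsto_sum_mul_rpow_sub_of_unique_max (hp : p ∈ S)
    (hdom : ∀ q ∈ S, q ≠ p → e q < e p) :
    Tendsto (fun a : ℝ => ∑ q ∈ S, c q * a ^ (e q - e p)) atTop (𝓝 (c p)) := by
  classical
  have hrest : Tendsto (fun a : ℝ => ∑ q ∈ S.erase p, c q * a ^ (e q - e p)) atTop (𝓝 0) := by
    rw [← Finset.sum_const_zero (s := S.erase p)]
    refine tendsto_finsetSum _ fun q hq => ?_
    obtain ⟨hqp, hqS⟩ := Finset.mem_erase.mp hq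
    rw [← mul_zero (c q)]
    refine (tendsto_rpow_neg_atTop (y := e p - e q) ?_).const_mul (c q) |>.congr fun a => ?_
    · linarith [hdom q hqS hqp]
    · rw [neg_sub]
  have hlead : ∀ a : ℝ, c p * a ^ (e p - e p) = c p := fun a => by
    rw [sub_self, Real.rpow_zero, mul_one]
  simp_rw [← Finset.add_sum_erase S _ hp, hlead]
  simpa using hrest.const_add (c p)

theorem eventually_pos_sum_mul_rpow_of_unique_max (hp : p ∈ S) (hcp : 0 < c p)
    (hdom : ∀ q ∈ S, q ≠ p → e q < e p) :
    ∀ᶠ a : ℝ in atTop, 0 < ∑ q ∈ S, c q * a ^ e q := by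
  filter_upwards [(tendsto_sum_mul_rpow_sub_of_unique_max (c := c) hp hdom).eventually
    (eventually_gt_nhds hcp), eventually_gt_atTop 0] with a hsum ha
  have hfactor : ∑ q ∈ S, c q * a ^ e q = a ^ e p * ∑ q ∈ S, c q * a ^ (e q - e p) := by
    rw [Finset.mul_sum]
    refine Finset.sum_congr rfl fun q _ => ?_
    rw [Real.rpow_sub ha]
    field_simp [(Real.rpow_pos_of_pos ha (e p)).ne']
  rw [hfactor]
  exact mul_pos (Real.rpow_pos_of_pos ha _) hsum

end DominantExponent

theorem sign_variant_positive_vertex_cluster_sat_general {d m : ℕ}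
    (F : Fin m → Finset (Fin d → ℕ)) (coef : Fin m → (Fin d → ℕ) → ℝ)
    (τ : Fin d → Bool)
    (p : Fin m → (Fin d → ℕ)) (hp : ∀ i, p i ∈ F i)
    (hppos : ∀ i, 0 <
      (-1 : ℝ) ^ (Finset.univ.filter (fun j => τ j = true ∧ Odd (p i j))).card *
        coef i (p i))
    (n : Fin d → ℝ)
    (hvert : ∀ i, ∀ q ∈ F i, q ≠ p i →
      ∑ j, n j * (p i j : ℝ) > ∑ j, n j * (q j : ℝ)) :
    (∃ a₀ : ℝ, 0 < a₀ ∧ ∀ a : ℝ, a₀ ≤ a → ∀ i : Fin m,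
      0 < ∑ q ∈ F i, coef i q *
        ∏ j, ((if τ j then (-1 : ℝ) else 1) * a ^ n j) ^ q j) ∧
    (∃ x : Fin d → ℝ,
      ∀ i : Fin m, 0 < ∑ q ∈ F i, coef i q * ∏ j, x j ^ q j) := by
  have heventually : ∀ᶠ a : ℝ in atTop, ∀ i, 0 < ∑ q ∈ F i, coef i q *
      ∏ j, ((if τ j then (-1 : ℝ) else 1) * a ^ n j) ^ q j := by
    refine eventually_all.mpr fun i => ?_
    filter_upwards [eventually_pos_sum_mul_rpow_of_unique_max (hp i)
      (c := fun q => coef i q *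
        (-1 : ℝ) ^ (Finset.univ.filter (fun j => τ j = true ∧ Odd (q j))).card)
      (by rw [mul_comm]; exact hppos i) (hvert i), eventually_gt_atTop 0] with a hpos ha
    simpa only [prod_signed_rpow_pow τ n ha, mul_assoc] using hpos
  obtain ⟨a₁, ha₁⟩ := eventually_atTop.mp heventually
  have hlarge : ∀ a, max a₁ 1 ≤ a → ∀ i, 0 < ∑ q ∈ F i, coef i q *
      ∏ j, ((if τ j then (-1 : ℝ) else 1) * a ^ n j) ^ q j :=
    fun a ha => ha₁ a (le_of_max_le_left ha)
  exact ⟨⟨max a₁ 1, by positivity, hlarge⟩, ⟨_, hlarge _ le_rfl⟩⟩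

/-- If (p₁,…,p_m) is a positive vertex cluster of τ(f₁),…,τ(f_m) w.r.t.
n (each p_i is a vertex of the frame of f_i w.r.t. n and the coefficient of p_i in
τ(f_i), namely (-1)^k (f_i)_{p_i}, is positive), then there is a₀ > 0 with
f_i(τ(a)^n) > 0 for all a ≥ a₀ and all i; in particular ∧ f_i > 0 has a real
solution. -/
theorem sign_variant_positive_vertex_cluster_sat {d m : ℕ}
    (F : Fin m → Finset (Fin d → ℕ)) (coef : Fin m → (Fin d → ℕ) → ℝ)
    (hcoef : ∀ i, ∀ q ∈ F i, coef i q ≠ 0)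
    (τ : Fin d → Bool)
    (p : Fin m → (Fin d → ℕ)) (hp : ∀ i, p i ∈ F i)
    (hppos : ∀ i, 0 <
      (-1 : ℝ) ^ (Finset.univ.filter (fun j => τ j = true ∧ Odd (p i j))).card *
        coef i (p i))
    (n : Fin d → ℝ)
    (hvert : ∀ i, ∀ q ∈ F i, q ≠ p i →
      ∑ j, n j * (p i j : ℝ) > ∑ j, n j * (q j : ℝ)) :
    (∃ a₀ : ℝ, 0 < a₀ ∧ ∀ a : ℝ, a₀ ≤ a → ∀ i : Fin m,
      0 < ∑ q ∈ F i, coef i q *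
        ∏ j, ((if τ j then (-1 : ℝ) else 1) * a ^ n j) ^ q j) ∧
    (∃ x : Fin d → ℝ,
      ∀ i : Fin m, 0 < ∑ q ∈ F i, coef i q * ∏ j, x j ^ q j) :=
  sign_variant_positive_vertex_cluster_sat_general F coef τ p hp hppos n hvert
end
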